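/- Let \hat{P}, \hat{P}_a, \hat{P}_b be mutually independent real-valued random variables on a common probability space with positive means, such that \hat{P} is square-integrable, \hat{P}_a and \hat{P}_b are integrable, and the products \hat{P}\hat{P}_a, \hat{P}\hat{P}_b and \hat{P}^2 \hat{P}_a \hat{P}_b are integrable. Define \hat{P}_1 = \hat{P}\hat{P}_a and \hat{P}_2 = \hat{P}\hat{P}_b. Then Cov(\hat{P}_1, \hat{P}_2) / (E[\hat{P}_1] E[\hat{P}_2]) = Var(\hat{P}) / E[\hat{P}]^2. -/

import Mathlib

open MeasureTheory ProbabilityTheory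

/-! Independence factors every moment involved: `E[P̂ P̂ₐ] = E[P̂] E[P̂ₐ]`, `E[P̂ P̂_b] = E[P̂] E[P̂_b]`
and `E[P̂² P̂ₐ P̂_b] = E[P̂²] E[P̂ₐ] E[P̂_b]`. The nonzero factor `E[P̂ₐ] E[P̂_b]` then cancels from
numerator and denominator of the normalized covariance. -/

-- At `m = 0` both sides are `0`, by the convention `x / 0 = 0`.
lemma sub_mul_div_mul_eq_sub_div_sq {K : Type*} [Field K] (s m a b : K) (ha : a ≠ 0)
    (hb : b ≠ 0) :
    (s * (a * b) - m * a * (m * b)) / (m * a * (m * b)) = (s - m ^ 2) / m ^ 2 := by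
  rw [show s * (a * b) - m * a * (m * b) = (s - m ^ 2) * (a * b) by ring,
    show m * a * (m * b) = m ^ 2 * (a * b) by ring, mul_div_mul_right _ _ (mul_ne_zero ha hb)]

namespace ProbabilityTheory

variable {Ω ι : Type*} [MeasurableSpace Ω] {μ : Measure Ω} {f : ι → Ω → ℝ}

lemma iIndepFun.integral_mul_mul_mul_eq (hf : iIndepFun f μ) (hmeas : ∀ i, AEMeasurable (f i) μ)
    {i j k : ι} (hij : i ≠ j) (hik : i ≠ k) (hjk : j ≠ k) :
    ∫ ω, (f i ω * f j ω) * (f i ω * f k ω) ∂μ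
      = (∫ ω, f i ω ^ 2 ∂μ) * ((∫ ω, f j ω ∂μ) * ∫ ω, f k ω ∂μ) := by
  have hsq_prod : ∫ ω, (f i * f i) ω * (f j * f k) ω ∂μ
      = (∫ ω, (f i * f i) ω ∂μ) * ∫ ω, (f j * f k) ω ∂μ :=
    (hf.indepFun_mul_mul₀ hmeas i i j k hij hik hij hik).integral_fun_mul_eq_mul_integral
      ((hmeas i).mul (hmeas i)).aestronglyMeasurable
      ((hmeas j).mul (hmeas k)).aestronglyMeasurable
  have hprod : ∫ ω, f j ω * f k ω ∂μ = (∫ ω, f j ω ∂μ) * ∫ ω, f k ω ∂μ :=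
    (hf.indepFun hjk).integral_fun_mul_eq_mul_integral (hmeas j).aestronglyMeasurable
      (hmeas k).aestronglyMeasurable
  simp only [Pi.mul_apply, ← sq] at hsq_prod
  rw [← hprod, ← hsq_prod]
  congr 1 with ω
  ring

end ProbabilityTheory

theorem common_factor_cov_identity_general
    {Ω : Type*} [MeasurableSpace Ω] (μ : Measure Ω)
    (Phat Pa Pb : Ω → ℝ)
    (hPhat : Measurable Phat) (hPa : Measurable Pa) (hPb : Measurable Pb)
    (hIndep : iIndepFun ![Phat, Pa, Pb] μ)
    (hMeanPa : 0 < ∫ ω, Pa ω ∂μ)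
    (hMeanPb : 0 < ∫ ω, Pb ω ∂μ) :
    ((∫ ω, (Phat ω * Pa ω) * (Phat ω * Pb ω) ∂μ) -
        (∫ ω, Phat ω * Pa ω ∂μ) * (∫ ω, Phat ω * Pb ω ∂μ)) /
      ((∫ ω, Phat ω * Pa ω ∂μ) * (∫ ω, Phat ω * Pb ω ∂μ)) =
    ((∫ ω, (Phat ω) ^ 2 ∂μ) - (∫ ω, Phat ω ∂μ) ^ 2) / (∫ ω, Phat ω ∂μ) ^ 2 := by
  have hmeas : ∀ i, AEMeasurable (![Phat, Pa, Pb] i) μ := by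
    simp [Fin.forall_fin_succ, hPhat.aemeasurable, hPa.aemeasurable, hPb.aemeasurable]
  have hPhatPa : ∫ ω, Phat ω * Pa ω ∂μ = (∫ ω, Phat ω ∂μ) * ∫ ω, Pa ω ∂μ :=
    (hIndep.indepFun (i := 0) (j := 1) (by decide)).integral_fun_mul_eq_mul_integral
      hPhat.aestronglyMeasurable hPa.aestronglyMeasurable
  have hPhatPb : ∫ ω, Phat ω * Pb ω ∂μ = (∫ ω, Phat ω ∂μ) * ∫ ω, Pb ω ∂μ :=
    (hIndep.indepFun (i := 0) (j := 2) (by decide)).integral_fun_mul_eq_mul_integral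
      hPhat.aestronglyMeasurable hPb.aestronglyMeasurable
  have hcross : ∫ ω, (Phat ω * Pa ω) * (Phat ω * Pb ω) ∂μ
      = (∫ ω, Phat ω ^ 2 ∂μ) * ((∫ ω, Pa ω ∂μ) * ∫ ω, Pb ω ∂μ) :=
    hIndep.integral_mul_mul_mul_eq hmeas (i := 0) (j := 1) (k := 2) (by decide) (by decide)
      (by decide)
  rw [hcross, hPhatPa, hPhatPb]
  exact sub_mul_div_mul_eq_sub_div_sq _ _ _ _ hMeanPa.ne' hMeanPb.ne'

/-- Proposition A.3: if `P̂₁ = P̂ P̂ₐ` and `P̂₂ = P̂ P̂_b` where `P̂, P̂ₐ, P̂_b` are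
mutually independent with positive means, then
`Cov(P̂₁, P̂₂)/(E[P̂₁] E[P̂₂]) = Var(P̂)/E[P̂]²` (i.e. `δ₁ δ₂ ρ = δ²`). -/
theorem common_factor_cov_identity
    {Ω : Type*} [MeasurableSpace Ω] (μ : Measure Ω) [IsProbabilityMeasure μ]
    (Phat Pa Pb : Ω → ℝ)
    (hPhat : Measurable Phat) (hPa : Measurable Pa) (hPb : Measurable Pb)
    (hIndep : iIndepFun ![Phat, Pa, Pb] μ)
    (hMeanPhat : 0 < ∫ ω, Phat ω ∂μ)
    (hMeanPa : 0 < ∫ ω, Pa ω ∂μ)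
    (hMeanPb : 0 < ∫ ω, Pb ω ∂μ)
    (hL2 : MemLp Phat 2 μ)
    (hIntPa : Integrable Pa μ) (hIntPb : Integrable Pb μ)
    (hInt1 : Integrable (fun ω => Phat ω * Pa ω) μ)
    (hInt2 : Integrable (fun ω => Phat ω * Pb ω) μ)
    (hInt12 : Integrable (fun ω => (Phat ω) ^ 2 * Pa ω * Pb ω) μ) :
    ((∫ ω, (Phat ω * Pa ω) * (Phat ω * Pb ω) ∂μ) -
        (∫ ω, Phat ω * Pa ω ∂μ) * (∫ ω, Phat ω * Pb ω ∂μ)) /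
      ((∫ ω, Phat ω * Pa ω ∂μ) * (∫ ω, Phat ω * Pb ω ∂μ)) =
    ((∫ ω, (Phat ω) ^ 2 ∂μ) - (∫ ω, Phat ω ∂μ) ^ 2) / (∫ ω, Phat ω ∂μ) ^ 2 :=
  common_factor_cov_identity_general μ Phat Pa Pb hPhat hPa hPb hIndep hMeanPa hMeanPb
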